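/- The central monoid (F₃, ⋄) is cancellative: for all f, g, h ∈ F₃, f ⋄ g = f ⋄ h implies g = h, and g ⋄ f = h ⋄ f implies g = h. -/

import Mathlib

/-!
Left cancellation: `f` is injective, so `φ_{l(f)}(g) = φ_{l(f)}(h)`, and `φ_α` is injective on
maps of `[0,1]`.

Right cancellation rests on the additivity of central depths, `|l(g ⋄ f)| = |l(g)| + |l(f)|`.
Since `g ⋄ f` is `g` composed with a permutation of `I_{l(g)}`, it maps `I_{l(g)}` onto the same
triadic interval as `g`. If `g ⋄ f` were linear on `I_{1^N}` onto `I_ε` with `N < |l(g)|`, this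
would force `g` to be linear there too; if `|l(g)| ≤ N < |l(g)| + |l(f)|`, the target `I_ε` lies
inside `g(I_{l(g)}) = I_β`, so `β` is a prefix of `ε` and `f` would be linear on a shorter
central interval. Given equal depths, `g ⋄ f = h ⋄ f` forces `g(I_α) = h(I_α)` for the common
central leaf `α`, hence `g = h` there, and off `I_α` both agree with `g ⋄ f = h ⋄ f`.
-/

open Set
open scoped Classical

noncomputable section

/-- An address: a finite word in the alphabet `{0,1,2}`. -/
abbrev Address : Type := List (Fin 3)

/-- Left endpoint of the triadic interval `I_α`. -/
def addrLeft : Address → ℝ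
  | [] => 0
  | i :: α => ((i : ℕ) : ℝ) / 3 + addrLeft α / 3

/-- Length of the triadic interval `I_α`. -/
def addrLen (α : Address) : ℝ := (1 / 3 : ℝ) ^ α.length

/-- The triadic subinterval `I_α ⊆ [0,1]` determined by the address `α`. -/
def Iaddr (α : Address) : Set ℝ := Set.Icc (addrLeft α) (addrLeft α + addrLen α)

/-- The linear orientation-preserving isomorphism `ψ_α : I_α → [0,1]`. -/
def psi (α : Address) (t : ℝ) : ℝ := (t - addrLeft α) / addrLen α

/-- The inverse `ψ_α⁻¹ : [0,1] → I_α`. -/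
def psiInv (α : Address) (t : ℝ) : ℝ := addrLeft α + addrLen α * t

/-- `φ_α(f)` acts as `ψ_α⁻¹ ∘ f ∘ ψ_α` on `I_α` and as the identity elsewhere. -/
def phi (α : Address) (f : ℝ → ℝ) : ℝ → ℝ :=
  fun t => if t ∈ Iaddr α then psiInv α (f (psi α t)) else t

/-- A triadic rational. -/
def IsTriadic (q : ℝ) : Prop := ∃ a : ℤ, ∃ n : ℕ, q = (a : ℝ) / 3 ^ n

/-- Membership in the Brown–Thompson group `F₃`, realized as piecewise-linear
homeomorphisms of `[0,1]` (extended by the identity to all of `ℝ`) with breakpoints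
at triadic rationals and slopes powers of `3`. The group product is `f·g = g ∘ f`. -/
def IsF3 (f : ℝ → ℝ) : Prop :=
  (∀ t, t ∉ Set.Icc (0 : ℝ) 1 → f t = t) ∧
  Set.BijOn f (Set.Icc 0 1) (Set.Icc 0 1) ∧
  StrictMonoOn f (Set.Icc 0 1) ∧
  ∃ breaks : Finset ℝ, (∀ b ∈ breaks, IsTriadic b) ∧
    ∀ x ∈ Set.Icc (0 : ℝ) 1, x ∉ breaks →
      ∃ (k : ℤ) (c : ℝ), IsTriadic c ∧
        ∀ᶠ y in nhdsWithin x (Set.Icc 0 1), f y = (3 : ℝ) ^ k * y + c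

/-- `f` maps `I_α` linearly (preserving orientation, with triadic affine data)
onto the triadic interval `I_β`. -/
def IsTriadicLinearOn (f : ℝ → ℝ) (α β : Address) : Prop :=
  ∀ t ∈ Iaddr α, f t = psiInv β (psi α t)

/-- The depth of the maximal all-`i` leaf of the reduced domain tree of `f`:
the least `n` such that `f` maps `I_{iⁿ}` linearly onto a triadic interval. -/
def leafExp (i : Fin 3) (f : ℝ → ℝ) : ℕ :=
  sInf {n : ℕ | ∃ β : Address, IsTriadicLinearOn f (List.replicate n i) β}

/-- The address `l(f) = 1ⁿ` of the central leaf of `f` (the leaf of the reduced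
domain tree whose interval contains `1/2`). -/
def centralLeaf (f : ℝ → ℝ) : Address := List.replicate (leafExp 1 f) 1

/-- The central monoid operation `f ⋄ g = φ_{l(f)}(g) · f` (recall `a·b = b ∘ a`). -/
def diam (f g : ℝ → ℝ) : ℝ → ℝ := fun t => f (phi (centralLeaf f) g t)

lemma addrLen_pos (α : Address) : 0 < addrLen α := by
  unfold addrLen; positivity

lemma addrLen_cons (i : Fin 3) (α : Address) : addrLen (i :: α) = addrLen α / 3 := by
  simp only [addrLen, List.length_cons, pow_succ]; ring

lemma addrLen_append (α δ : Address) : addrLen (α ++ δ) = addrLen α * addrLen δ := by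
  simp only [addrLen, List.length_append, pow_add]

lemma addrLeft_append (α δ : Address) :
    addrLeft (α ++ δ) = addrLeft α + addrLen α * addrLeft δ := by
  induction α with
  | nil => simp [addrLeft, addrLen]
  | cons i α ih => simp only [List.cons_append, addrLeft, addrLen_cons, ih]; ring

lemma psi_psiInv (α : Address) (t : ℝ) : psi α (psiInv α t) = t := by
  unfold psi psiInv; field_simp [(addrLen_pos α).ne']; ring

lemma psiInv_psi (α : Address) (t : ℝ) : psiInv α (psi α t) = t := by
  unfold psi psiInv; field_simp [(addrLen_pos α).ne']; ring

lemma psiInv_injective (α : Address) : Function.Injective (psiInv α) :=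
  Function.LeftInverse.injective (psi_psiInv α)

lemma psi_append (α δ : Address) (t : ℝ) : psi (α ++ δ) t = psi δ (psi α t) := by
  unfold psi
  rw [addrLeft_append, addrLen_append]
  field_simp [(addrLen_pos α).ne', (addrLen_pos δ).ne']
  ring

lemma psiInv_append (α δ : Address) (t : ℝ) :
    psiInv (α ++ δ) t = psiInv α (psiInv δ t) := by
  simp only [psiInv, addrLeft_append, addrLen_append]; ring

lemma mem_Iaddr_iff (α : Address) (t : ℝ) : t ∈ Iaddr α ↔ psi α t ∈ Icc (0 : ℝ) 1 := by
  have hl := addrLen_pos α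
  simp only [Iaddr, psi, mem_Icc, le_div_iff₀ hl, div_le_one hl]
  constructor <;> rintro ⟨h₁, h₂⟩ <;> constructor <;> linarith

lemma psiInv_mem_Iaddr (α : Address) {t : ℝ} (ht : t ∈ Icc (0 : ℝ) 1) :
    psiInv α t ∈ Iaddr α := by
  rwa [mem_Iaddr_iff, psi_psiInv]

lemma image_psiInv_Icc (α : Address) : psiInv α '' Icc 0 1 = Iaddr α :=
  Subset.antisymm (image_subset_iff.2 fun _ ↦ psiInv_mem_Iaddr α)
    fun t ht ↦ ⟨psi α t, (mem_Iaddr_iff α t).1 ht, psiInv_psi α t⟩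

lemma image_psi_Iaddr (α : Address) : psi α '' Iaddr α = Icc 0 1 := by
  rw [← image_psiInv_Icc, image_image]; simp [psi_psiInv]

lemma mem_Iaddr_append (α δ : Address) (t : ℝ) :
    t ∈ Iaddr (α ++ δ) ↔ psi α t ∈ Iaddr δ := by
  rw [mem_Iaddr_iff, mem_Iaddr_iff δ, psi_append]

lemma Iaddr_append (α δ : Address) : Iaddr (α ++ δ) = psiInv α '' Iaddr δ := by
  simp only [← image_psiInv_Icc, image_image, psiInv_append]

lemma addrLeft_nonneg (α : Address) : 0 ≤ addrLeft α := by
  induction α with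
  | nil => simp [addrLeft]
  | cons i α ih => simp only [addrLeft]; positivity

lemma addrLeft_add_addrLen_le_one (α : Address) : addrLeft α + addrLen α ≤ 1 := by
  induction α with
  | nil => simp [addrLeft, addrLen]
  | cons i α ih =>
    have hi : ((i : ℕ) : ℝ) ≤ 2 := by exact_mod_cast Nat.le_of_lt_succ i.isLt
    rw [addrLeft, addrLen_cons]
    linarith

lemma Iaddr_subset_Icc (α : Address) : Iaddr α ⊆ Icc 0 1 :=
  Icc_subset_Icc (addrLeft_nonneg α) (addrLeft_add_addrLen_le_one α)

lemma Iaddr_append_subset (α δ : Address) : Iaddr (α ++ δ) ⊆ Iaddr α := fun t ht ↦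
  (mem_Iaddr_iff α t).2 (Iaddr_subset_Icc δ ((mem_Iaddr_append α δ t).1 ht))

lemma left_mem_Iaddr (α : Address) : addrLeft α ∈ Iaddr α :=
  left_mem_Icc.2 (le_add_of_nonneg_right (addrLen_pos α).le)

lemma right_mem_Iaddr (α : Address) : addrLeft α + addrLen α ∈ Iaddr α :=
  right_mem_Icc.2 (le_add_of_nonneg_right (addrLen_pos α).le)

lemma Iaddr_cons_subset (i : Fin 3) (α : Address) :
    Iaddr (i :: α) ⊆ Icc ((i : ℕ) / 3) (((i : ℕ) + 1) / 3) := by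
  rintro t ⟨h₁, h₂⟩
  have := addrLeft_nonneg α
  have := addrLeft_add_addrLen_le_one α
  rw [addrLen_cons] at h₂
  simp only [addrLeft] at h₁ h₂
  constructor <;> linarith

lemma Iaddr_append_subset_append_iff (α δ δ' : Address) :
    Iaddr (α ++ δ) ⊆ Iaddr (α ++ δ') ↔ Iaddr δ ⊆ Iaddr δ' := by
  rw [Iaddr_append, Iaddr_append, image_subset_image_iff (psiInv_injective α)]

lemma eq_of_Iaddr_cons_subset {i j : Fin 3} {β ε : Address}
    (h : Iaddr (j :: ε) ⊆ Iaddr (i :: β)) : j = i := by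
  have hlen := addrLen_pos (j :: ε)
  obtain ⟨hi₀, -⟩ := Iaddr_cons_subset i β (h (left_mem_Iaddr _))
  obtain ⟨-, hi₁⟩ := Iaddr_cons_subset i β (h (right_mem_Iaddr _))
  obtain ⟨hj₀, -⟩ := Iaddr_cons_subset j ε (left_mem_Iaddr _)
  obtain ⟨-, hj₁⟩ := Iaddr_cons_subset j ε (right_mem_Iaddr _)
  by_contra hne
  rcases Nat.lt_or_gt_of_ne (Fin.val_ne_of_ne hne) with hlt | hlt
  · have : ((j : ℕ) : ℝ) + 1 ≤ (i : ℕ) := by exact_mod_cast hlt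
    linarith
  · have : ((i : ℕ) : ℝ) + 1 ≤ (j : ℕ) := by exact_mod_cast hlt
    linarith

lemma prefix_of_Iaddr_subset {β ε : Address} (h : Iaddr ε ⊆ Iaddr β) : β <+: ε := by
  induction β generalizing ε with
  | nil => exact List.nil_prefix
  | cons i β ih =>
    cases ε with
    | nil =>
      have h₀ := Iaddr_cons_subset i β (h (left_mem_Iaddr []))
      have h₁ := Iaddr_cons_subset i β (h (right_mem_Iaddr []))
      simp only [addrLeft, addrLen, List.length_nil, pow_zero, zero_add, mem_Icc] at h₀ h₁
      linarith [h₀.1, h₁.2]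
    | cons j ε =>
      obtain rfl := eq_of_Iaddr_cons_subset h
      exact List.prefix_cons_inj j |>.2 (ih ((Iaddr_append_subset_append_iff [j] ε β).1 h))

lemma Iaddr_injective : Function.Injective Iaddr := fun _ _ h ↦
  (prefix_of_Iaddr_subset h.ge).eq_of_length_le (prefix_of_Iaddr_subset h.le).length_le

namespace IsTriadicLinearOn

variable {f g : ℝ → ℝ} {α β : Address}

lemma image_eq (h : IsTriadicLinearOn f α β) : f '' Iaddr α = Iaddr β := by
  rw [image_congr h, ← image_image, image_psi_Iaddr, image_psiInv_Icc]

lemma eqOn (hf : IsTriadicLinearOn f α β) (hg : IsTriadicLinearOn g α β) :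
    EqOn f g (Iaddr α) := fun t ht ↦ (hf t ht).trans (hg t ht).symm

lemma congr (hf : IsTriadicLinearOn f α β) (h : EqOn f g (Iaddr α)) :
    IsTriadicLinearOn g α β := fun t ht ↦ (h ht).symm.trans (hf t ht)

lemma append (h : IsTriadicLinearOn f α β) (δ : Address) :
    IsTriadicLinearOn f (α ++ δ) (β ++ δ) := fun t ht ↦ by
  rw [h t (Iaddr_append_subset α δ ht), psiInv_append, psi_append, psiInv_psi]

end IsTriadicLinearOn

namespace IsF3

variable {f : ℝ → ℝ}

lemma mapsTo (hf : IsF3 f) : MapsTo f (Icc 0 1) (Icc 0 1) := hf.2.1.mapsTo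

lemma image_Icc (hf : IsF3 f) : f '' Icc 0 1 = Icc 0 1 := hf.2.1.image_eq

lemma injective (hf : IsF3 f) : Function.Injective f := by
  intro x y hxy
  by_cases hx : x ∈ Icc (0 : ℝ) 1 <;> by_cases hy : y ∈ Icc (0 : ℝ) 1
  · exact hf.2.1.injOn hx hy hxy
  · exact (hy (by rw [← hf.1 y hy, ← hxy]; exact hf.mapsTo hx)).elim
  · exact (hx (by rw [← hf.1 x hx, hxy]; exact hf.mapsTo hy)).elim
  · rwa [hf.1 x hx, hf.1 y hy] at hxy

lemma eq_of_eqOn {g : ℝ → ℝ} (hf : IsF3 f) (hg : IsF3 g) (h : EqOn f g (Icc 0 1)) :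
    f = g := by
  funext t
  by_cases ht : t ∈ Icc (0 : ℝ) 1
  · exact h ht
  · rw [hf.1 t ht, hg.1 t ht]

end IsF3

lemma phi_of_mem {α : Address} {f : ℝ → ℝ} {t : ℝ} (ht : t ∈ Iaddr α) :
    phi α f t = psiInv α (f (psi α t)) := if_pos ht

lemma phi_of_not_mem {α : Address} {f : ℝ → ℝ} {t : ℝ} (ht : t ∉ Iaddr α) :
    phi α f t = t :=
  if_neg ht

lemma image_phi_Iaddr (α : Address) {f : ℝ → ℝ} (hf : f '' Icc 0 1 = Icc 0 1) :
    phi α f '' Iaddr α = Iaddr α := by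
  rw [image_congr fun _ ↦ phi_of_mem, ← image_image (psiInv α), ← image_image f,
    image_psi_Iaddr, hf, image_psiInv_Icc]

lemma eqOn_Icc_of_phi_eq {α : Address} {f g : ℝ → ℝ} (h : phi α f = phi α g) :
    EqOn f g (Icc 0 1) := fun s hs ↦ by
  have := congrFun h (psiInv α s)
  rwa [phi_of_mem (psiInv_mem_Iaddr α hs), phi_of_mem (psiInv_mem_Iaddr α hs), psi_psiInv,
    (psiInv_injective α).eq_iff] at this

lemma addrLeft_mul_pow_length (α : Address) : ∃ d : ℕ, addrLeft α * 3 ^ α.length = d := by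
  induction α with
  | nil => exact ⟨0, by simp [addrLeft]⟩
  | cons i α ih =>
    obtain ⟨d, hd⟩ := ih
    refine ⟨i * 3 ^ α.length + d, ?_⟩
    rw [addrLeft, List.length_cons, pow_succ]
    push_cast
    rw [← hd]
    ring

lemma exists_address_addrLeft_mul_pow {L d : ℕ} (hd : d < 3 ^ L) :
    ∃ β : Address, β.length = L ∧ addrLeft β * 3 ^ L = d := by
  induction L generalizing d with
  | zero =>
    obtain rfl : d = 0 := by simpa using hd
    exact ⟨[], rfl, by simp [addrLeft]⟩
  | succ L ih =>
    have hq : d / 3 ^ L < 3 := Nat.div_lt_of_lt_mul (by rwa [pow_succ] at hd)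
    obtain ⟨β, hlen, hβ⟩ := ih (Nat.mod_lt d (by positivity))
    refine ⟨⟨d / 3 ^ L, hq⟩ :: β, by simp [hlen], ?_⟩
    have hdiv : ((d / 3 ^ L : ℕ) : ℝ) * 3 ^ L + ((d % 3 ^ L : ℕ) : ℝ) = d := by
      exact_mod_cast Nat.div_add_mod' d (3 ^ L)
    rw [addrLeft, pow_succ, ← hdiv, ← hβ]
    ring

lemma exists_address_addrLeft_eq {L : ℕ} {c : ℝ} {d : ℤ} (hd : c * 3 ^ L = d) (h₀ : 0 ≤ c)
    (h₁ : c + (1 / 3) ^ L ≤ 1) : ∃ β : Address, β.length = L ∧ addrLeft β = c := by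
  have h3L : (0 : ℝ) < 3 ^ L := by positivity
  have hd₀ : 0 ≤ d := by exact_mod_cast hd ▸ mul_nonneg h₀ h3L.le
  have hdL : (d : ℝ) < 3 ^ L := by
    have : (1 / 3 : ℝ) ^ L * 3 ^ L = 1 := by rw [← mul_pow]; norm_num
    nlinarith
  obtain ⟨β, hlen, hβ⟩ :=
    exists_address_addrLeft_mul_pow ((Int.toNat_lt hd₀).2 (by exact_mod_cast hdL))
  refine ⟨β, hlen, mul_right_cancel₀ h3L.ne' ?_⟩
  rw [hβ, hd]
  exact_mod_cast Int.toNat_of_nonneg hd₀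

lemma exists_isTriadicLinearOn_of_psi {f : ℝ → ℝ} {α : Address} {L : ℕ} {c : ℝ} {d : ℤ}
    (hd : c * 3 ^ L = d) (hmaps : MapsTo f (Iaddr α) (Icc 0 1))
    (hf : ∀ t ∈ Iaddr α, f t = c + (1 / 3) ^ L * psi α t) :
    ∃ β, IsTriadicLinearOn f α β := by
  have hend : ∀ s ∈ Icc (0 : ℝ) 1, c + (1 / 3) ^ L * s ∈ Icc (0 : ℝ) 1 := fun s hs ↦ by
    have := hmaps (psiInv_mem_Iaddr α hs)
    rwa [hf _ (psiInv_mem_Iaddr α hs), psi_psiInv] at this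
  have h₀ := (hend 0 (left_mem_Icc.2 zero_le_one)).1
  have h₁ := (hend 1 (right_mem_Icc.2 zero_le_one)).2
  rw [mul_zero, add_zero] at h₀
  rw [mul_one] at h₁
  obtain ⟨β, hlen, hleft⟩ := exists_address_addrLeft_eq hd h₀ h₁
  refine ⟨β, fun t ht ↦ ?_⟩
  rw [hf t ht, psiInv, hleft, addrLen, hlen]

lemma exists_isTriadicLinearOn_of_affine {f : ℝ → ℝ} {α : Address} {k b : ℤ} {j : ℕ}
    (hkj : k + j ≤ α.length) (hmaps : MapsTo f (Iaddr α) (Icc 0 1))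
    (hf : ∀ t ∈ Iaddr α, f t = 3 ^ k * t + b / 3 ^ j) :
    ∃ β, IsTriadicLinearOn f α β := by
  set L := ((α.length : ℤ) - k).toNat
  have hjL : j ≤ L := by omega
  have h3 : (3 : ℝ) ^ k * 3 ^ L = 3 ^ α.length := by
    rw [← zpow_natCast (3 : ℝ) L, ← zpow_natCast (3 : ℝ) α.length,
      ← zpow_add₀ three_ne_zero]
    congr 1
    omega
  obtain ⟨a, ha⟩ := addrLeft_mul_pow_length α
  refine exists_isTriadicLinearOn_of_psi (L := L) (c := 3 ^ k * addrLeft α + b / 3 ^ j)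
    (d := a + b * 3 ^ (L - j)) ?_ hmaps fun t ht ↦ ?_
  · have h3j : (3 : ℝ) ^ L = 3 ^ (L - j) * 3 ^ j := by rw [← pow_add, Nat.sub_add_cancel hjL]
    push_cast
    rw [← ha, ← h3, h3j]
    field_simp
  · have hslope : (1 / 3 : ℝ) ^ L * 3 ^ α.length = 3 ^ k := by
      rw [← h3, mul_left_comm, ← mul_pow]; norm_num
    have hinv : ((1 / 3 : ℝ) ^ α.length)⁻¹ = 3 ^ α.length := by
      rw [one_div, inv_pow, inv_inv]
    rw [hf t ht, psi, addrLen, div_eq_mul_inv (t - _), hinv]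
    linear_combination (t - addrLeft α) * hslope.symm

lemma half_not_isTriadic : ¬ IsTriadic (1 / 2 : ℝ) := by
  rintro ⟨a, n, hn⟩
  have h : (3 : ℤ) ^ n = 2 * a := by
    have : (3 : ℝ) ^ n = 2 * a := by field_simp at hn; linarith
    exact_mod_cast this
  exact Int.not_even_iff_odd.2 (Odd.pow (by decide)) (h ▸ even_two_mul a)

lemma addrLeft_replicate_one (n : ℕ) : addrLeft (List.replicate n 1) = (1 - (1 / 3) ^ n) / 2 := by
  induction n with
  | zero => simp [addrLeft]
  | succ n ih => rw [List.replicate_succ, addrLeft, ih, pow_succ]; norm_num; ring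

lemma IsF3.exists_isTriadicLinearOn_replicate {f : ℝ → ℝ} (hf : IsF3 f) :
    ∃ n β, IsTriadicLinearOn f (List.replicate n 1) β := by
  obtain ⟨breaks, hbreaks, hpl⟩ := hf.2.2.2
  obtain ⟨k, c, ⟨b, j, rfl⟩, hev⟩ :=
    hpl (1 / 2) (by norm_num) fun h ↦ half_not_isTriadic (hbreaks _ h)
  obtain ⟨ε, hε, hball⟩ := Metric.eventually_nhds_iff.1 (eventually_nhdsWithin_iff.1 hev)
  obtain ⟨n₀, hn₀⟩ := exists_pow_lt_of_lt_one hε (by norm_num : (1 / 3 : ℝ) < 1)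
  -- `n ≥ n₀` puts `I_{1ⁿ}` inside that neighbourhood, `n ≥ k + j` makes its image triadic.
  set n := max n₀ (k.toNat + j)
  have hsmall : (1 / 3 : ℝ) ^ n < ε :=
    (pow_le_pow_of_le_one (by norm_num) (by norm_num) (le_max_left _ _)).trans_lt hn₀
  refine ⟨n, exists_isTriadicLinearOn_of_affine (by rw [List.length_replicate]; omega)
    (hf.mapsTo.mono_left (Iaddr_subset_Icc _)) fun t ht ↦ hball ?_ (Iaddr_subset_Icc _ ht)⟩
  obtain ⟨h₁, h₂⟩ := ht
  simp only [addrLeft_replicate_one, addrLen, List.length_replicate] at h₁ h₂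
  rw [Real.dist_eq, abs_sub_lt_iff]
  constructor <;> linarith

lemma leafExp_le {i : Fin 3} {f : ℝ → ℝ} {n : ℕ} {β : Address}
    (h : IsTriadicLinearOn f (List.replicate n i) β) : leafExp i f ≤ n :=
  Nat.sInf_le ⟨β, h⟩

lemma exists_isTriadicLinearOn_leafExp {i : Fin 3} {f : ℝ → ℝ} {n : ℕ} {β : Address}
    (h : IsTriadicLinearOn f (List.replicate n i) β) :
    ∃ β', IsTriadicLinearOn f (List.replicate (leafExp i f) i) β' :=
  Nat.sInf_mem (s := {n | ∃ β, IsTriadicLinearOn f (List.replicate n i) β}) ⟨n, β, h⟩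

lemma IsF3.exists_isTriadicLinearOn_centralLeaf {f : ℝ → ℝ} (hf : IsF3 f) :
    ∃ β, IsTriadicLinearOn f (centralLeaf f) β :=
  let ⟨_, _, h⟩ := hf.exists_isTriadicLinearOn_replicate
  exists_isTriadicLinearOn_leafExp h

section diam

variable {f g : ℝ → ℝ} {β ε : Address}

lemma diam_of_not_mem {t : ℝ} (ht : t ∉ Iaddr (centralLeaf g)) : diam g f t = g t := by
  rw [diam, phi_of_not_mem ht]

lemma diam_of_mem (hf : MapsTo f (Icc 0 1) (Icc 0 1))
    (hβ : IsTriadicLinearOn g (centralLeaf g) β) {t : ℝ} (ht : t ∈ Iaddr (centralLeaf g)) :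
    diam g f t = psiInv β (f (psi (centralLeaf g) t)) := by
  have hft := hf ((mem_Iaddr_iff _ t).1 ht)
  rw [diam, phi_of_mem ht, hβ _ (psiInv_mem_Iaddr _ hft), psi_psiInv]

lemma image_diam_centralLeaf (hf : f '' Icc 0 1 = Icc 0 1) :
    diam g f '' Iaddr (centralLeaf g) = g '' Iaddr (centralLeaf g) := by
  change (g ∘ phi (centralLeaf g) f) '' _ = _
  rw [image_comp, image_phi_Iaddr _ hf]

lemma IsTriadicLinearOn.diam (hf : MapsTo f (Icc 0 1) (Icc 0 1))
    (hβ : IsTriadicLinearOn g (centralLeaf g) β) {α δ : Address}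
    (hδ : IsTriadicLinearOn f α δ) :
    IsTriadicLinearOn (diam g f) (centralLeaf g ++ α) (β ++ δ) := fun t ht ↦ by
  rw [diam_of_mem hf hβ (Iaddr_append_subset _ _ ht), hδ _ ((mem_Iaddr_append _ _ t).1 ht),
    psiInv_append, psi_append]

lemma isTriadicLinearOn_of_diam_of_le (hf : f '' Icc 0 1 = Icc 0 1)
    (hβ : IsTriadicLinearOn g (centralLeaf g) β) {N : ℕ} (hN : N ≤ leafExp 1 g)
    (hε : IsTriadicLinearOn (diam g f) (List.replicate N 1) ε) :
    IsTriadicLinearOn g (List.replicate N 1) ε := by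
  obtain ⟨k, hk⟩ : ∃ k, centralLeaf g = List.replicate N 1 ++ List.replicate k 1 :=
    ⟨leafExp 1 g - N, by rw [centralLeaf, ← List.replicate_add, Nat.add_sub_cancel' hN]⟩
  have hεk := hε.append (List.replicate k 1)
  rw [← hk] at hεk
  obtain rfl : ε ++ List.replicate k 1 = β := Iaddr_injective <| by
    rw [← hεk.image_eq, image_diam_centralLeaf hf, hβ.image_eq]
  refine hε.congr fun t _ ↦ ?_
  by_cases htc : t ∈ Iaddr (centralLeaf g)
  · exact hεk.eqOn hβ htc
  · exact diam_of_not_mem htc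

lemma exists_isTriadicLinearOn_of_diam_append (hf : f '' Icc 0 1 = Icc 0 1)
    (hβ : IsTriadicLinearOn g (centralLeaf g) β) {α : Address}
    (hε : IsTriadicLinearOn (diam g f) (centralLeaf g ++ α) ε) :
    ∃ ε', IsTriadicLinearOn f α ε' := by
  obtain ⟨ε', rfl⟩ : β <+: ε := prefix_of_Iaddr_subset <| by
    rw [← hε.image_eq, ← hβ.image_eq, ← image_diam_centralLeaf hf]
    exact image_mono (Iaddr_append_subset _ _)
  refine ⟨ε', fun u hu ↦ psiInv_injective β ?_⟩
  have ht : psiInv (centralLeaf g) u ∈ Iaddr (centralLeaf g ++ α) := by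
    rw [Iaddr_append]; exact mem_image_of_mem _ hu
  have := hε _ ht
  rwa [diam_of_mem (mapsTo_iff_image_subset.2 hf.subset) hβ (Iaddr_append_subset _ _ ht),
    psi_psiInv, psiInv_append, psi_append, psi_psiInv] at this

end diam

theorem leafExp_diam {f g : ℝ → ℝ} (hg : IsF3 g) (hf : IsF3 f) :
    leafExp 1 (diam g f) = leafExp 1 g + leafExp 1 f := by
  obtain ⟨β, hβ⟩ := hg.exists_isTriadicLinearOn_centralLeaf
  obtain ⟨δ, hδ⟩ := hf.exists_isTriadicLinearOn_centralLeaf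
  have hupper := hβ.diam hf.mapsTo hδ
  rw [centralLeaf, centralLeaf, ← List.replicate_add] at hupper
  obtain ⟨ε, hε⟩ := exists_isTriadicLinearOn_leafExp hupper
  have hgN : leafExp 1 g ≤ leafExp 1 (diam g f) := by
    by_contra! hlt
    exact hlt.not_ge (leafExp_le (isTriadicLinearOn_of_diam_of_le hf.image_Icc hβ hlt.le hε))
  obtain ⟨q, hq⟩ := Nat.exists_eq_add_of_le hgN
  rw [hq, List.replicate_add] at hε
  obtain ⟨ε', hε'⟩ := exists_isTriadicLinearOn_of_diam_append hf.image_Icc hβ hε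
  have := leafExp_le hε'
  have := leafExp_le hupper
  omega

/-- the central monoid `(F₃, ⋄)` is cancellative. -/
theorem diam_cancellative (f g h : ℝ → ℝ) (hf : IsF3 f) (hg : IsF3 g) (hh : IsF3 h) :
    (diam f g = diam f h → g = h) ∧ (diam g f = diam h f → g = h) := by
  constructor
  · intro heq
    have hphi : phi (centralLeaf f) g = phi (centralLeaf f) h :=
      funext fun t ↦ hf.injective (congrFun heq t)
    exact hg.eq_of_eqOn hh (eqOn_Icc_of_phi_eq hphi)
  · intro heq
    have hleaf : centralLeaf h = centralLeaf g := by
      have := leafExp_diam hg hf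
      rw [heq, leafExp_diam hh hf] at this
      rw [centralLeaf, centralLeaf, Nat.add_right_cancel this]
    obtain ⟨β, hβ⟩ := hg.exists_isTriadicLinearOn_centralLeaf
    obtain ⟨γ, hγ⟩ := hh.exists_isTriadicLinearOn_centralLeaf
    obtain rfl : β = γ := Iaddr_injective <| by
      rw [← hβ.image_eq, ← hγ.image_eq, ← image_diam_centralLeaf hf.image_Icc,
        ← image_diam_centralLeaf hf.image_Icc, heq, hleaf]
    funext t
    by_cases ht : t ∈ Iaddr (centralLeaf g)
    · exact hβ.eqOn (hleaf ▸ hγ) ht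
    · rw [← diam_of_not_mem (f := f) ht, heq, diam_of_not_mem (hleaf ▸ ht)]
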